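/- For every n ≥ 4, with O₁ = ((n-1,n),(1,2,…,n-1)), O' = ((n-1,n),(1,2,…,n)), and O₆ = ((2,3,…,n),(1,2,n,n-1,…,3)), one has T(O₁) ≃ O' and S(O') ≃ O₆, where ≃ denotes equivalence by simultaneous conjugation. -/

import Mathlib

open Equiv

/-- The permutation of `Fin n` given by 1-based cycle notation `(a1, ..., ak)`:
each listed square `a` (an element of `{1, ..., n}`) corresponds to `a - 1 : Fin n`,
and the cycle sends each listed element to the next one, the last back to the first. -/
def cyc (n : ℕ) (l : List ℕ) : Equiv.Perm (Fin n) :=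
  (l.filterMap fun a => if h : a - 1 < n then some (⟨a - 1, h⟩ : Fin n) else none).formPerm

/-- Equivalence of origami pairs by simultaneous conjugation. -/
def OrigamiEquiv {n : ℕ} (p q : Equiv.Perm (Fin n) × Equiv.Perm (Fin n)) : Prop :=
  ∃ g : Equiv.Perm (Fin n), g * p.1 * g⁻¹ = q.1 ∧ g * p.2 * g⁻¹ = q.2

/-- The action of `T`: `T(h,v) = (h, v h⁻¹)`. -/
def Tact {n : ℕ} (p : Equiv.Perm (Fin n) × Equiv.Perm (Fin n)) :
    Equiv.Perm (Fin n) × Equiv.Perm (Fin n) := (p.1, p.2 * p.1⁻¹)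

/-- The action of `T⁻¹`: `T⁻¹(h,v) = (h, v h)`. -/
def TinvAct {n : ℕ} (p : Equiv.Perm (Fin n) × Equiv.Perm (Fin n)) :
    Equiv.Perm (Fin n) × Equiv.Perm (Fin n) := (p.1, p.2 * p.1)

/-- The action of `S`: `S(h,v) = (h v⁻¹, v)`. -/
def Sact {n : ℕ} (p : Equiv.Perm (Fin n) × Equiv.Perm (Fin n)) :
    Equiv.Perm (Fin n) × Equiv.Perm (Fin n) := (p.1 * p.2⁻¹, p.2)

/-- The action of `S⁻¹`: `S⁻¹(h,v) = (h v, v)`. -/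
def SinvAct {n : ℕ} (p : Equiv.Perm (Fin n) × Equiv.Perm (Fin n)) :
    Equiv.Perm (Fin n) × Equiv.Perm (Fin n) := (p.1 * p.2, p.2)

/-- `O₁ = ((n-1,n), (1,2,...,n-1))` -/
def OE1 (n : ℕ) : Equiv.Perm (Fin n) × Equiv.Perm (Fin n) :=
  (cyc n [n - 1, n], cyc n (List.range' 1 (n - 1)))

/-- `O₆ = ((2,3,...,n), (1, 2, n, n-1, ..., 3))` -/
def OE6 (n : ℕ) : Equiv.Perm (Fin n) × Equiv.Perm (Fin n) :=
  (cyc n (List.range' 2 (n - 1)), cyc n (1 :: 2 :: (List.range' 3 (n - 2)).reverse))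

/-- `O' = ((n-1,n), (1,2,...,n))` -/
def Oprime (n : ℕ) : Equiv.Perm (Fin n) × Equiv.Perm (Fin n) :=
  (cyc n [n - 1, n], cyc n (List.range' 1 n))


theorem filterMap_eq_pmap (n : ℕ) : ∀ (l : List ℕ) (H : ∀ a ∈ l, a - 1 < n),
    (l.filterMap fun a => if h : a - 1 < n then some (⟨a - 1, h⟩ : Fin n) else none)
      = l.pmap (fun a h => ⟨a - 1, h⟩) H
  | [], _ => by simp
  | a :: t, H => by
    rw [List.filterMap_cons, dif_pos (H a List.mem_cons_self), List.pmap,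
      filterMap_eq_pmap n t (fun b hb => H b (List.mem_cons_of_mem a hb))]

theorem cyc_apply' (n : ℕ) (l : List ℕ) (H1 : ∀ a ∈ l, 1 ≤ a ∧ a ≤ n) (hnd : l.Nodup)
    (i : ℕ) (hi : i < l.length) (x y : Fin n)
    (hx : l[i] = x.1 + 1)
    (hy : l[(i + 1) % l.length]'(Nat.mod_lt _ (Nat.lt_of_le_of_lt (Nat.zero_le i) hi)) = y.1 + 1) :
    cyc n l x = y := by
  have H : ∀ a ∈ l, a - 1 < n := fun a ha => by have := H1 a ha; omega
  unfold cyc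
  rw [filterMap_eq_pmap n l H]
  have hnd' : (l.pmap (fun a h => (⟨a - 1, h⟩ : Fin n)) H).Nodup := by
    rw [List.pmap_eq_map_attach]
    refine List.Nodup.map_on ?_ hnd.attach
    rintro ⟨a, ha⟩ - ⟨b, hb⟩ - hab
    have h1 := H1 a ha; have h2 := H1 b hb
    simp only [Fin.mk.injEq] at hab
    exact Subtype.ext (by simpa using (by omega : a = b))
  have key := List.formPerm_apply_getElem _ hnd' i (by simpa using hi)
  simp only [List.getElem_pmap, List.length_pmap] at key
  have hxlt := x.isLt
  have e1 : x = ⟨l[i] - 1, H _ (l.getElem_mem hi)⟩ := Fin.ext (by simp; omega)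
  rw [e1, key]
  exact Fin.ext (by simp; omega)

theorem cyc_apply_of_not_mem (n : ℕ) (l : List ℕ) (H1 : ∀ a ∈ l, 1 ≤ a ∧ a ≤ n)
    (x : Fin n) (hx : x.1 + 1 ∉ l) : cyc n l x = x := by
  have H : ∀ a ∈ l, a - 1 < n := fun a ha => by have := H1 a ha; omega
  unfold cyc
  rw [filterMap_eq_pmap n l H]
  apply List.formPerm_apply_of_notMem
  intro hmem
  rw [List.mem_pmap] at hmem
  obtain ⟨a, ha, hax⟩ := hmem
  have h1 := H1 a ha
  have hv : a - 1 = x.1 := congrArg Fin.val hax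
  have : x.1 + 1 = a := by omega
  exact hx (this ▸ ha)

theorem cyc_apply_mid (n : ℕ) (l : List ℕ) (H1 : ∀ a ∈ l, 1 ≤ a ∧ a ≤ n) (hnd : l.Nodup)
    (i : ℕ) (hi : i + 1 < l.length) (x y : Fin n)
    (hx : l[i]'(by omega) = x.1 + 1) (hy : l[i + 1] = y.1 + 1) :
    cyc n l x = y := by
  refine cyc_apply' n l H1 hnd i (by omega) x y hx ?_
  have h2 : (i + 1) % l.length = i + 1 := Nat.mod_eq_of_lt hi
  simp only [h2]
  exact hy

theorem cyc_apply_last (n : ℕ) (l : List ℕ) (H1 : ∀ a ∈ l, 1 ≤ a ∧ a ≤ n) (hnd : l.Nodup)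
    (hl : 0 < l.length) (x y : Fin n)
    (hx : l[l.length - 1]'(by omega) = x.1 + 1) (hy : l[0]'hl = y.1 + 1) :
    cyc n l x = y := by
  refine cyc_apply' n l H1 hnd (l.length - 1) (by omega) x y hx ?_
  have h2 : (l.length - 1 + 1) % l.length = 0 := by
    rw [Nat.sub_add_cancel hl, Nat.mod_self]
  simp only [h2]
  exact hy

theorem vp_apply (n : ℕ) (hn : 4 ≤ n) (x : Fin n) :
    (cyc n (List.range' 1 n) x).val = if x.1 = n - 1 then 0 else x.1 + 1 := by
  have hx := x.isLt
  have H1 : ∀ a ∈ List.range' 1 n, 1 ≤ a ∧ a ≤ n := by intro a ha; simp at ha; omega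
  by_cases h : x.1 = n - 1
  · rw [cyc_apply_last n _ H1 List.nodup_range' (by simp; omega) x ⟨0, by omega⟩
      (by simp [List.getElem_range']; omega) (by simp [List.getElem_range'])]
    simp only [Fin.val_mk]; split_ifs <;> omega
  · rw [cyc_apply_mid n _ H1 List.nodup_range' x.1 (by simp; omega) x ⟨x.1 + 1, by omega⟩
      (by simp [List.getElem_range']; omega) (by simp [List.getElem_range']; omega)]
    simp only [Fin.val_mk]; split_ifs <;> omega

theorem v_apply (n : ℕ) (hn : 4 ≤ n) (x : Fin n) :
    (cyc n (List.range' 1 (n - 1)) x).val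
      = if x.1 = n - 2 then 0 else if x.1 = n - 1 then n - 1 else x.1 + 1 := by
  have hx := x.isLt
  have H1 : ∀ a ∈ List.range' 1 (n - 1), 1 ≤ a ∧ a ≤ n := by intro a ha; simp at ha; omega
  by_cases h : x.1 = n - 1
  · rw [cyc_apply_of_not_mem n _ H1 x (by simp; omega)]
    split_ifs <;> omega
  · by_cases h2 : x.1 = n - 2
    · rw [cyc_apply_last n _ H1 List.nodup_range' (by simp; omega) x ⟨0, by omega⟩
        (by simp [List.getElem_range']; omega) (by simp [List.getElem_range'])]
      simp only [Fin.val_mk]; split_ifs <;> omega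
    · rw [cyc_apply_mid n _ H1 List.nodup_range' x.1 (by simp; omega) x ⟨x.1 + 1, by omega⟩
        (by simp [List.getElem_range']; omega) (by simp [List.getElem_range']; omega)]
      simp only [Fin.val_mk]; split_ifs <;> omega

theorem d_apply (n : ℕ) (hn : 4 ≤ n) (x : Fin n) :
    (cyc n (List.range' 2 (n - 1)) x).val
      = if x.1 = 0 then 0 else if x.1 = n - 1 then 1 else x.1 + 1 := by
  have hx := x.isLt
  have H1 : ∀ a ∈ List.range' 2 (n - 1), 1 ≤ a ∧ a ≤ n := by intro a ha; simp at ha; omega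
  by_cases h : x.1 = 0
  · rw [cyc_apply_of_not_mem n _ H1 x (by simp; omega)]
    split_ifs <;> omega
  · by_cases h2 : x.1 = n - 1
    · rw [cyc_apply_last n _ H1 List.nodup_range' (by simp; omega) x ⟨1, by omega⟩
        (by simp [List.getElem_range']; omega) (by simp [List.getElem_range'])]
      simp only [Fin.val_mk]; split_ifs <;> omega
    · rw [cyc_apply_mid n _ H1 List.nodup_range' (x.1 - 1) (by simp; omega) x
        ⟨x.1 + 1, by omega⟩
        (by simp [List.getElem_range']; omega) (by simp [List.getElem_range']; omega)]
      simp only [Fin.val_mk]; split_ifs <;> omega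

theorem h_apply (n : ℕ) (hn : 4 ≤ n) (x : Fin n) :
    (cyc n [n - 1, n] x).val
      = if x.1 = n - 2 then n - 1 else if x.1 = n - 1 then n - 2 else x.1 := by
  have hx := x.isLt
  have H1 : ∀ a ∈ [n - 1, n], 1 ≤ a ∧ a ≤ n := by intro a ha; simp at ha; omega
  have hnd : ([n - 1, n] : List ℕ).Nodup := by simp; omega
  by_cases h : x.1 = n - 2
  · rw [cyc_apply_mid n _ H1 hnd 0 (by simp) x ⟨n - 1, by omega⟩ (by simp; omega) (by simp; omega)]
    simp only [Fin.val_mk]; split_ifs <;> omega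
  · by_cases h2 : x.1 = n - 1
    · rw [cyc_apply_last n _ H1 hnd (by simp) x ⟨n - 2, by omega⟩ (by simp; omega)
        (by simp; omega)]
      simp only [Fin.val_mk]; split_ifs <;> omega
    · rw [cyc_apply_of_not_mem n _ H1 x (by simp; omega)]
      split_ifs <;> omega

theorem c_getElem (n : ℕ) (hn : 4 ≤ n) (i j : ℕ) (hij : i = j + 2) (hj : j < n - 2)
    (hi : i < (1 :: 2 :: (List.range' 3 (n - 2)).reverse).length) :
    (1 :: 2 :: (List.range' 3 (n - 2)).reverse)[i] = n - j := by
  subst hij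
  simp only [show ∀ k : ℕ, k + 2 = k + 1 + 1 from fun k => rfl, List.getElem_cons_succ]
  rw [List.getElem_reverse]
  simp [List.getElem_range']
  try omega

theorem c_apply (n : ℕ) (hn : 4 ≤ n) (x : Fin n) :
    (cyc n (1 :: 2 :: (List.range' 3 (n - 2)).reverse) x).val
      = if x.1 = 0 then 1 else if x.1 = 1 then n - 1 else if x.1 = 2 then 0 else x.1 - 1 := by
  have hx := x.isLt
  have H1 : ∀ a ∈ 1 :: 2 :: (List.range' 3 (n - 2)).reverse, 1 ≤ a ∧ a ≤ n := by
    intro a ha; simp at ha; omega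
  have hnd : (1 :: 2 :: (List.range' 3 (n - 2)).reverse).Nodup := by
    simp [List.nodup_range']
    try omega
  have hlen : (1 :: 2 :: (List.range' 3 (n - 2)).reverse).length = n := by simp; omega
  by_cases h0 : x.1 = 0
  · rw [cyc_apply_mid n _ H1 hnd 0 (by rw [hlen]; omega) x ⟨1, by omega⟩ (by simp; omega)
      (by simp)]
    simp only [Fin.val_mk]; split_ifs <;> omega
  · by_cases h1 : x.1 = 1
    · rw [cyc_apply_mid n _ H1 hnd 1 (by rw [hlen]; omega) x ⟨n - 1, by omega⟩ (by simp; omega)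
        (by rw [c_getElem n hn _ 0 rfl (by omega)]; (try simp only [Fin.val_mk]); omega)]
      simp only [Fin.val_mk]; split_ifs <;> omega
    · by_cases h2 : x.1 = 2
      · rw [cyc_apply_last n _ H1 hnd (by rw [hlen]; omega) x ⟨0, by omega⟩
          (by rw [c_getElem n hn _ (n - 3) (by rw [hlen]; omega) (by omega)]; (try simp only [Fin.val_mk]); omega)
          (by simp)]
        simp only [Fin.val_mk]; split_ifs <;> omega
      · rw [cyc_apply_mid n _ H1 hnd (n - x.1 + 1) (by rw [hlen]; omega) x ⟨x.1 - 1, by omega⟩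
          (by rw [c_getElem n hn _ (n - x.1 - 1) (by omega) (by omega)]; (try simp only [Fin.val_mk]); omega)
          (by rw [c_getElem n hn _ (n - x.1) (by omega) (by omega)]; (try simp only [Fin.val_mk]); omega)]
        simp only [Fin.val_mk]; split_ifs <;> omega

def invoFun (n : ℕ) : Fin n → Fin n := fun x =>
  if h : x.1 < 2 then x else ⟨n + 1 - x.1, by omega⟩

theorem invoFun_involutive (n : ℕ) : Function.Involutive (invoFun n) := by
  intro x
  have hx := x.isLt
  unfold invoFun
  by_cases h : x.1 < 2
  · simp [h]
  · rw [dif_neg h, dif_neg (show ¬((⟨n + 1 - x.1, by omega⟩ : Fin n).1 < 2) by simp; omega)]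
    exact Fin.ext (by simp; omega)

def invoPerm (n : ℕ) : Equiv.Perm (Fin n) :=
  Function.Involutive.toPerm (invoFun n) (invoFun_involutive n)

theorem invo_apply (n : ℕ) (x : Fin n) :
    (invoPerm n x).val = if x.1 < 2 then x.1 else n + 1 - x.1 := by
  show ((Function.Involutive.toPerm (invoFun n) (invoFun_involutive n)) x).val = _
  rw [Function.Involutive.coe_toPerm]
  unfold invoFun
  by_cases h : x.1 < 2 <;> simp [h]

section comps
variable (n : ℕ) (hn : 4 ≤ n) (x : Fin n)

set_option maxHeartbeats 1000000

theorem comp1 (hn : 4 ≤ n) (x : Fin n) :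
    (cyc n (List.range' 1 n) (cyc n [n - 1, n] x)).val
      = if x.1 = n - 2 then 0 else if x.1 = n - 1 then n - 1 else x.1 + 1 := by
  have hx := x.isLt
  have q1 : n - 2 ≠ 0 := by omega
  have q2 : n - 2 ≠ 1 := by omega
  have q3 : n - 1 ≠ 0 := by omega
  have q4 : n - 1 ≠ 1 := by omega
  have q5 : ¬(n - 1 = n - 2) := by omega
  have q6 : ¬(n - 2 = n - 1) := by omega
  rw [vp_apply n hn, h_apply n hn]
  by_cases h0 : x.1 = 0 <;> by_cases h1 : x.1 = 1 <;> by_cases h3 : x.1 = n - 2 <;>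
    by_cases h4 : x.1 = n - 1 <;>
    simp only [h0, h1, h3, h4, q1, q2, q3, q4, q5, q6, if_true, if_false] <;>
    first | omega | (split_ifs <;> first | contradiction | omega)

theorem comp2 (hn : 4 ≤ n) (x : Fin n) :
    (invoPerm n (cyc n [n - 1, n] x)).val
      = if x.1 = 0 then 0 else if x.1 = 1 then 1
        else if x.1 = n - 2 then 2 else if x.1 = n - 1 then 3 else n + 1 - x.1 := by
  have hx := x.isLt
  have q1 : n - 2 ≠ 0 := by omega
  have q2 : n - 2 ≠ 1 := by omega
  have q3 : n - 1 ≠ 0 := by omega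
  have q4 : n - 1 ≠ 1 := by omega
  have q5 : ¬(n - 1 = n - 2) := by omega
  have q6 : ¬(n - 2 = n - 1) := by omega
  rw [invo_apply n, h_apply n hn]
  by_cases h0 : x.1 = 0 <;> by_cases h1 : x.1 = 1 <;> by_cases h3 : x.1 = n - 2 <;>
    by_cases h4 : x.1 = n - 1 <;>
    simp only [h0, h1, h3, h4, q1, q2, q3, q4, q5, q6, if_true, if_false] <;>
    first | omega | (split_ifs <;> first | contradiction | omega)

theorem comp3 (hn : 4 ≤ n) (x : Fin n) :
    (cyc n (1 :: 2 :: (List.range' 3 (n - 2)).reverse)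
        (invoPerm n (cyc n [n - 1, n] x))).val
      = if x.1 = 0 then 1 else if x.1 = 1 then n - 1
        else if x.1 = n - 2 then 0 else if x.1 = n - 1 then 2 else n - x.1 := by
  have hx := x.isLt
  have q1 : n - 2 ≠ 0 := by omega
  have q2 : n - 2 ≠ 1 := by omega
  have q3 : n - 1 ≠ 0 := by omega
  have q4 : n - 1 ≠ 1 := by omega
  have q5 : ¬(n - 1 = n - 2) := by omega
  have q6 : ¬(n - 2 = n - 1) := by omega
  rw [c_apply n hn, comp2 n hn x]
  by_cases h0 : x.1 = 0 <;> by_cases h1 : x.1 = 1 <;> by_cases h3 : x.1 = n - 2 <;>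
    by_cases h4 : x.1 = n - 1 <;>
    simp only [h0, h1, h3, h4, q1, q2, q3, q4, q5, q6, if_true, if_false] <;>
    first | omega | (split_ifs <;> first | contradiction | omega)

theorem comp4 (hn : 4 ≤ n) (x : Fin n) :
    (invoPerm n (cyc n (List.range' 1 n) x)).val
      = if x.1 = 0 then 1 else if x.1 = n - 2 then 2
        else if x.1 = n - 1 then 0 else n - x.1 := by
  have hx := x.isLt
  have q1 : n - 2 ≠ 0 := by omega
  have q2 : n - 2 ≠ 1 := by omega
  have q3 : n - 1 ≠ 0 := by omega
  have q4 : n - 1 ≠ 1 := by omega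
  have q5 : ¬(n - 1 = n - 2) := by omega
  have q6 : ¬(n - 2 = n - 1) := by omega
  rw [invo_apply n, vp_apply n hn]
  by_cases h0 : x.1 = 0 <;> by_cases h1 : x.1 = 1 <;> by_cases h3 : x.1 = n - 2 <;>
    by_cases h4 : x.1 = n - 1 <;>
    simp only [h0, h1, h3, h4, q1, q2, q3, q4, q5, q6, if_true, if_false] <;>
    first | omega | (split_ifs <;> first | contradiction | omega)

theorem comp5 (hn : 4 ≤ n) (x : Fin n) :
    (cyc n (1 :: 2 :: (List.range' 3 (n - 2)).reverse)
        (invoPerm n (cyc n (List.range' 1 n) x))).val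
      = if x.1 = 0 then n - 1 else if x.1 = 1 then n - 2
        else if x.1 = n - 2 then 0 else if x.1 = n - 1 then 1 else n - x.1 - 1 := by
  have hx := x.isLt
  have q1 : n - 2 ≠ 0 := by omega
  have q2 : n - 2 ≠ 1 := by omega
  have q3 : n - 1 ≠ 0 := by omega
  have q4 : n - 1 ≠ 1 := by omega
  have q5 : ¬(n - 1 = n - 2) := by omega
  have q6 : ¬(n - 2 = n - 1) := by omega
  rw [c_apply n hn, comp4 n hn x]
  by_cases h0 : x.1 = 0 <;> by_cases h1 : x.1 = 1 <;> by_cases h3 : x.1 = n - 2 <;>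
    by_cases h4 : x.1 = n - 1 <;>
    simp only [h0, h1, h3, h4, q1, q2, q3, q4, q5, q6, if_true, if_false] <;>
    first | omega | (split_ifs <;> first | contradiction | omega)

theorem comp6 (hn : 4 ≤ n) (x : Fin n) :
    (cyc n (List.range' 2 (n - 1)) (cyc n (1 :: 2 :: (List.range' 3 (n - 2)).reverse)
        (invoPerm n (cyc n (List.range' 1 n) x)))).val
      = if x.1 = 0 then 1 else if x.1 = 1 then n - 1
        else if x.1 = n - 2 then 0 else if x.1 = n - 1 then 2 else n - x.1 := by
  have hx := x.isLt
  have q1 : n - 2 ≠ 0 := by omega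
  have q2 : n - 2 ≠ 1 := by omega
  have q3 : n - 1 ≠ 0 := by omega
  have q4 : n - 1 ≠ 1 := by omega
  have q5 : ¬(n - 1 = n - 2) := by omega
  have q6 : ¬(n - 2 = n - 1) := by omega
  rw [d_apply n hn, comp5 n hn x]
  by_cases h0 : x.1 = 0 <;> by_cases h1 : x.1 = 1 <;> by_cases h3 : x.1 = n - 2 <;>
    by_cases h4 : x.1 = n - 1 <;>
    simp only [h0, h1, h3, h4, q1, q2, q3, q4, q5, q6, if_true, if_false] <;>
    first | omega | (split_ifs <;> first | contradiction | omega)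

theorem comp7 (hn : 4 ≤ n) (x : Fin n) :
    (cyc n (1 :: 2 :: (List.range' 3 (n - 2)).reverse) (invoPerm n x)).val
      = if x.1 = 0 then 1 else if x.1 = 1 then n - 1
        else if x.1 = n - 1 then 0 else n - x.1 := by
  have hx := x.isLt
  have q1 : n - 2 ≠ 0 := by omega
  have q2 : n - 2 ≠ 1 := by omega
  have q3 : n - 1 ≠ 0 := by omega
  have q4 : n - 1 ≠ 1 := by omega
  have q5 : ¬(n - 1 = n - 2) := by omega
  have q6 : ¬(n - 2 = n - 1) := by omega
  rw [c_apply n hn, invo_apply n]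
  by_cases h0 : x.1 = 0 <;> by_cases h1 : x.1 = 1 <;> by_cases h3 : x.1 = n - 2 <;>
    by_cases h4 : x.1 = n - 1 <;>
    simp only [h0, h1, h3, h4, q1, q2, q3, q4, q5, q6, if_true, if_false] <;>
    first | omega | (split_ifs <;> first | contradiction | omega)

theorem comp8 (hn : 4 ≤ n) (x : Fin n) :
    (cyc n (1 :: 2 :: (List.range' 3 (n - 2)).reverse)
        (cyc n (1 :: 2 :: (List.range' 3 (n - 2)).reverse) (invoPerm n x))).val
      = if x.1 = 0 then n - 1 else if x.1 = 1 then n - 2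
        else if x.1 = n - 2 then 0 else if x.1 = n - 1 then 1 else n - x.1 - 1 := by
  have hx := x.isLt
  have q1 : n - 2 ≠ 0 := by omega
  have q2 : n - 2 ≠ 1 := by omega
  have q3 : n - 1 ≠ 0 := by omega
  have q4 : n - 1 ≠ 1 := by omega
  have q5 : ¬(n - 1 = n - 2) := by omega
  have q6 : ¬(n - 2 = n - 1) := by omega
  rw [c_apply n hn, comp7 n hn x]
  by_cases h0 : x.1 = 0 <;> by_cases h1 : x.1 = 1 <;> by_cases h3 : x.1 = n - 2 <;>
    by_cases h4 : x.1 = n - 1 <;>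
    simp only [h0, h1, h3, h4, q1, q2, q3, q4, q5, q6, if_true, if_false] <;>
    first | omega | (split_ifs <;> first | contradiction | omega)

end comps

theorem stmt4 (n : ℕ) (hn : 4 ≤ n) :
    OrigamiEquiv (Tact (OE1 n)) (Oprime n) ∧ OrigamiEquiv (Sact (Oprime n)) (OE6 n) := by
  constructor
  · refine ⟨1, by simp [Tact, OE1, Oprime], ?_⟩
    simp only [Tact, OE1, Oprime]
    rw [one_mul, inv_one, mul_one, mul_inv_eq_iff_eq_mul]
    ext x
    simp only [Equiv.Perm.mul_apply]
    rw [v_apply n hn, comp1 n hn x]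
  · refine ⟨cyc n (1 :: 2 :: (List.range' 3 (n - 2)).reverse) * invoPerm n, ?_, ?_⟩
    · simp only [Sact, Oprime, OE6]
      rw [mul_inv_eq_iff_eq_mul, ← mul_assoc, mul_inv_eq_iff_eq_mul]
      ext x
      simp only [Equiv.Perm.mul_apply]
      rw [comp3 n hn x, comp6 n hn x]
    · simp only [Sact, Oprime, OE6]
      rw [mul_inv_eq_iff_eq_mul]
      ext x
      simp only [Equiv.Perm.mul_apply]
      rw [comp5 n hn x, comp8 n hn x]
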